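/- Fix n ≥ 1, d ≥ 2, d ≤ k ≤ n(d−1), and set N = N(n,d,k) = binom(n+d−1, d) − C(n,d,k) + 1, where C(n,d,k) is the number of degree-d monomial divisors of m(n,d,k). Let J be the ideal generated by x₁^d,…,x_n^d together with any N − n further distinct monomials of degree d. Then J contains every monomial of degree k, i.e., J_k = K[x₁,…,x_n]_k. -/

import Mathlib

open MvPolynomial

/-- Number of monomial divisors of degree `d` of the monomial with exponent vector `v`. -/
def divCount {n : ℕ} (d : ℕ) (v : Fin n → ℕ) : ℕ :=
  ((Finset.Iic v).filter fun a => ∑ i, a i = d).card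

/-- Exponent vector of `m(n,d,k) = x₁^(d-1) ⋯ x_q^(d-1) x_{q+1}^r`. -/
def mExp (n d q r : ℕ) : Fin n → ℕ := fun i =>
  if (i : ℕ) < q then d - 1 else if (i : ℕ) = q then r else 0

/-- `C(n,d,k)`, the number of degree-`d` monomial divisors of `m(n,d,k)`. -/
def Cndk (n d q r : ℕ) : ℕ := divCount d (mExp n d q r)

/-- `N(n,d,k) = binom(n+d-1, d) − C(n,d,k) + 1`. -/
def Nndk (n d q r : ℕ) : ℕ := Nat.choose (n + d - 1) d - Cndk n d q r + 1

/-!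
If some exponent of `v` is at least `d`, a generator `x_i^d` divides `x^v`. Otherwise every
`v_i ≤ d - 1`, and it suffices to show that `x^v` has at least `C(n,d,k)` divisors of degree `d`:
`S` misses only `C(n,d,k) - 1` monomials of degree `d`, so by pigeonhole one of these divisors
lies in `S`.

The number of degree-`d` divisors of `x^v` is the coefficient of `X^d` in `∏ i, P (v i)`, where
`P a = 1 + X + ⋯ + X^a`. For `b ≤ a` we have
`P a * P (b + 1) = P (a + 1) * P b + (X^(b+1) + ⋯ + X^a)`, so moving one unit of exponent
from a smaller entry to a larger one never increases the count. Combined with swaps, such moves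
push mass towards small indices; a vector on which no move is possible is exactly the greedy
vector `m(n,d,k)`, which is therefore a minimiser.
-/

open Finset
open scoped Polynomial

noncomputable def geomPoly (a : ℕ) : ℕ[X] := ∑ t ∈ range (a + 1), Polynomial.X ^ t

theorem geomPoly_succ (a : ℕ) : geomPoly (a + 1) = geomPoly a + Polynomial.X ^ (a + 1) :=
  sum_range_succ _ _

theorem geomPoly_succ' (a : ℕ) : geomPoly (a + 1) = 1 + Polynomial.X * geomPoly a := by
  rw [geomPoly, geomPoly, sum_range_succ', add_comm, mul_sum]
  simp only [pow_succ', pow_zero]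

theorem geomPoly_mul_geomPoly_succ {a b : ℕ} (hba : b ≤ a) :
    geomPoly a * geomPoly (b + 1) =
      geomPoly (a + 1) * geomPoly b + ∑ t ∈ Ioc b a, Polynomial.X ^ t := by
  induction a, hba using Nat.le_induction with
  | base => simp [mul_comm]
  | succ a hba ih =>
    rw [geomPoly_succ a, add_mul, ih, sum_Ioc_succ_top hba, geomPoly_succ (a + 1),
      geomPoly_succ' b]
    ring

theorem divCount_eq_coeff_prod_geomPoly {n : ℕ} (d : ℕ) (v : Fin n → ℕ) :
    divCount d v = (∏ i, geomPoly (v i)).coeff d := by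
  classical
  have hIic : Iic v = Fintype.piFinset fun i => range (v i + 1) := by
    ext a; simp [Pi.le_def]
  simp only [geomPoly, prod_univ_sum, prod_pow_eq_pow_sum, Polynomial.finsetSum_coeff,
    Polynomial.coeff_X_pow, sum_boole, Nat.cast_id, divCount, hIic, eq_comm]

theorem divCount_comp_perm {n : ℕ} (d : ℕ) (v : Fin n → ℕ) (σ : Equiv.Perm (Fin n)) :
    divCount d (v ∘ σ) = divCount d v := by
  simp only [divCount_eq_coeff_prod_geomPoly, Function.comp_apply,
    Equiv.prod_comp σ fun i => geomPoly (v i)]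

@[to_additive]
theorem Fintype.prod_eq_mul_mul_prod_compl_pair {ι M : Type*} [Fintype ι] [DecidableEq ι]
    [CommMonoid M] {i j : ι} (hij : i ≠ j) (f : ι → M) :
    ∏ l, f l = f i * f j * ∏ l ∈ {i, j}ᶜ, f l := by
  rw [← prod_pair hij, prod_mul_prod_compl]

theorem divCount_le_of_transfer {n d : ℕ} {v w : Fin n → ℕ} {i j : Fin n} (hij : i ≠ j)
    (hoff : ∀ l, l ≠ i → l ≠ j → w l = v l) (hwi : w i = v i + 1) (hvj : v j = w j + 1)
    (hle : w j ≤ v i) : divCount d w ≤ divCount d v := by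
  have hrest : ∏ l ∈ {i, j}ᶜ, geomPoly (w l) = ∏ l ∈ {i, j}ᶜ, geomPoly (v l) :=
    prod_congr rfl fun l hl => by
      simp only [mem_compl, mem_insert, mem_singleton, not_or] at hl
      rw [hoff l hl.1 hl.2]
  rw [divCount_eq_coeff_prod_geomPoly, divCount_eq_coeff_prod_geomPoly,
    Fintype.prod_eq_mul_mul_prod_compl_pair hij, Fintype.prod_eq_mul_mul_prod_compl_pair hij,
    hrest, hwi, hvj, geomPoly_mul_geomPoly_succ hle, add_mul, Polynomial.coeff_add]
  exact Nat.le_add_right _ _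

section Transfer

variable {ι : Type*} [Fintype ι] [DecidableEq ι] {v w : ι → ℕ} {i j : ι}

theorem sum_compl_pair_eq_of_transfer (hoff : ∀ l, l ≠ i → l ≠ j → w l = v l) (c : ι → ℕ) :
    ∑ l ∈ {i, j}ᶜ, c l * w l = ∑ l ∈ {i, j}ᶜ, c l * v l :=
  sum_congr rfl fun l hl => by
    simp only [mem_compl, mem_insert, mem_singleton, not_or] at hl
    rw [hoff l hl.1 hl.2]

theorem sum_eq_of_transfer (hij : i ≠ j) (hoff : ∀ l, l ≠ i → l ≠ j → w l = v l)
    (hpair : w i + w j = v i + v j) : ∑ l, w l = ∑ l, v l := by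
  have := sum_compl_pair_eq_of_transfer hoff 1
  simp only [Pi.one_apply, one_mul] at this
  rw [Fintype.sum_eq_add_add_sum_compl_pair hij, Fintype.sum_eq_add_add_sum_compl_pair hij v,
    this, hpair]

theorem sum_mul_lt_of_transfer (hij : i ≠ j) (hoff : ∀ l, l ≠ i → l ≠ j → w l = v l)
    (hpair : w i + w j = v i + v j) (hlt : v i < w i) {c : ι → ℕ} (hc : c j < c i) :
    ∑ l, c l * v l < ∑ l, c l * w l := by
  rw [Fintype.sum_eq_add_add_sum_compl_pair hij, Fintype.sum_eq_add_add_sum_compl_pair hij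
    (fun l => c l * w l), sum_compl_pair_eq_of_transfer hoff]
  obtain ⟨e, he⟩ : ∃ e, w i = v i + e + 1 := ⟨w i - v i - 1, by omega⟩
  have hwj : v j = w j + e + 1 := by omega
  rw [he, hwj]
  nlinarith

end Transfer

theorem exists_transfer_divCount_le {n d : ℕ} {u : Fin n → ℕ} (hbd : ∀ l, u l ≤ d - 1)
    {i j : Fin n} (hij : i ≠ j) (hi : u i < d - 1) (hj : 0 < u j) :
    ∃ w : Fin n → ℕ, (∀ l, l ≠ i → l ≠ j → w l = u l) ∧ w i + w j = u i + u j ∧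
      u i < w i ∧ (∀ l, w l ≤ d - 1) ∧ divCount d w ≤ divCount d u := by
  rcases le_or_gt (u j) (u i) with hji | hlt
  · set w := Function.update (Function.update u i (u i + 1)) j (u j - 1)
    have hoff : ∀ l, l ≠ i → l ≠ j → w l = u l := fun l hli hlj => by
      simp [w, Function.update_of_ne hli, Function.update_of_ne hlj]
    have hwi : w i = u i + 1 := by simp [w, Function.update_of_ne hij]
    have hwj : w j = u j - 1 := by simp [w]
    refine ⟨w, hoff, by omega, by omega, fun l => ?_,
      divCount_le_of_transfer hij hoff hwi (by omega) (by omega)⟩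
    by_cases hli : l = i
    · subst hli; omega
    by_cases hlj : l = j
    · subst hlj; have := hbd l; omega
    · rw [hoff l hli hlj]; exact hbd l
  · refine ⟨u ∘ Equiv.swap i j, fun l hli hlj => by simp [Equiv.swap_apply_of_ne_of_ne hli hlj],
      by simp [add_comm], by simpa using hlt, fun l => hbd _, (divCount_comp_perm d u _).le⟩

theorem sum_mExp {n d p s : ℕ} (hp : p ≤ n) (hpn : p = n → s = 0) :
    ∑ i, mExp n d p s i = p * (d - 1) + s := by
  obtain ⟨m, rfl⟩ := Nat.exists_eq_add_of_le hp
  unfold mExp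
  rw [Fin.sum_univ_eq_sum_range (fun i => if i < p then d - 1 else if i = p then s
    else 0), sum_range_add, sum_congr rfl fun i hi => if_pos (mem_range.1 hi), sum_const,
    card_range, smul_eq_mul]
  simp only [add_lt_iff_neg_left, not_lt_zero, if_false, add_eq_left, sum_ite_eq', mem_range]
  rcases m with _ | m
  · simp [hpn rfl]
  · simp

theorem mExp_eq_of_sum_eq {n d p s q r : ℕ} (hp : p ≤ n) (hpn : p = n → s = 0) (hs : s < d - 1)
    (hr : r < d - 1) (hsum : ∑ i, mExp n d p s i = q * (d - 1) + r) :
    mExp n d p s = mExp n d q r := by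
  rw [sum_mExp hp hpn] at hsum
  have hdiv (a b : ℕ) (hb : b < d - 1) : (a * (d - 1) + b) / (d - 1) = a ∧
      (a * (d - 1) + b) % (d - 1) = b :=
    (Nat.div_mod_unique (by omega)).2 ⟨by ring, hb⟩
  obtain ⟨rfl, rfl⟩ : p = q ∧ s = r := by
    obtain ⟨h1, h2⟩ := hdiv p s hs
    obtain ⟨h3, h4⟩ := hdiv q r hr
    rw [hsum] at h1 h2
    exact ⟨h1.symm.trans h3, h2.symm.trans h4⟩
  rfl

theorem eq_mExp_of_forall_lt {n d q r : ℕ} {u : Fin n → ℕ} (hbd : ∀ i, u i ≤ d - 1)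
    (hsum : ∑ i, u i = q * (d - 1) + r) (hr : r < d - 1)
    (hshape : ∀ i j, i < j → u i < d - 1 → u j = 0) : u = mExp n d q r := by
  obtain ⟨p, s, hp, hpn, hs, rfl⟩ : ∃ p s, p ≤ n ∧ (p = n → s = 0) ∧ s < d - 1 ∧
      u = mExp n d p s := by
    by_cases hne : (univ.filter fun i => u i < d - 1).Nonempty
    · set i₀ := (univ.filter fun i => u i < d - 1).min' hne
      have hi₀ : u i₀ < d - 1 := (mem_filter.1 (min'_mem _ hne)).2
      refine ⟨i₀, u i₀, i₀.isLt.le, fun h => absurd h i₀.isLt.ne, hi₀, funext fun l => ?_⟩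
      rcases lt_trichotomy l i₀ with hl | rfl | hl
      · have : ¬ u l < d - 1 := fun h => (min'_le _ l (by simp [h])).not_gt hl
        simp [mExp, Fin.lt_def.1 hl]; have := hbd l; omega
      · simp [mExp]
      · simp [mExp, (Fin.lt_def.1 hl).not_gt, (Fin.lt_def.1 hl).ne', hshape i₀ l hl hi₀]
    · refine ⟨n, 0, le_rfl, fun _ => rfl, by omega, funext fun l => ?_⟩
      have : ¬ u l < d - 1 := fun h => hne ⟨l, by simp [h]⟩
      simp [mExp, l.isLt]; have := hbd l; omega
  exact mExp_eq_of_sum_eq hp hpn hs hr hsum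

theorem cndk_le_divCount {n d q r : ℕ} (hr : r < d - 1) {v : Fin n → ℕ} (hbd : ∀ i, v i ≤ d - 1)
    (hsum : ∑ i, v i = q * (d - 1) + r) : Cndk n d q r ≤ divCount d v := by
  set T := (Iic fun _ => d - 1).filter fun u : Fin n → ℕ =>
    ∑ i, u i = ∑ i, v i ∧ divCount d u ≤ divCount d v
  have hmemT (u : Fin n → ℕ) :
      u ∈ T ↔ (∀ i, u i ≤ d - 1) ∧ ∑ i, u i = ∑ i, v i ∧ divCount d u ≤ divCount d v := by
    simp [T, Pi.le_def]
  -- A transfer towards a smaller index raises the weight `∑ l, (n - l) * u l`, so a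
  -- maximiser of the weight within `T` admits none and has the greedy shape.
  obtain ⟨u, huT, hmax⟩ := T.exists_max_image (fun u => ∑ l, (n - l) * u l)
    ⟨v, (hmemT v).2 ⟨hbd, rfl, le_rfl⟩⟩
  obtain ⟨hubd, husum, hucount⟩ := (hmemT u).1 huT
  have hshape : ∀ i j, i < j → u i < d - 1 → u j = 0 := by
    intro i j hij hi
    by_contra hj
    obtain ⟨w, hoff, hpair, hlt, hwbd, hwcount⟩ :=
      exists_transfer_divCount_le hubd hij.ne hi (Nat.pos_of_ne_zero hj)
    have hwT : w ∈ T := (hmemT w).2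
      ⟨hwbd, (sum_eq_of_transfer hij.ne hoff hpair).trans husum, hwcount.trans hucount⟩
    exact (hmax w hwT).not_gt <| sum_mul_lt_of_transfer hij.ne hoff hpair hlt (by omega)
  rw [Cndk, ← eq_mExp_of_forall_lt hubd (husum.trans hsum) hr hshape]
  exact hucount

theorem exists_mem_le_of_card_eq {n d q r : ℕ} (hr : r < d - 1) {S : Finset (Fin n →₀ ℕ)}
    (hSdeg : ∀ v ∈ S, ∑ i, v i = d) (hSpow : ∀ i : Fin n, Finsupp.single i d ∈ S)
    (hScard : S.card = Nndk n d q r) {v : Fin n →₀ ℕ} (hv : ∑ i, v i = q * (d - 1) + r) :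
    ∃ w ∈ S, w ≤ v := by
  by_cases hbig : ∃ i, d ≤ v i
  · obtain ⟨i, hi⟩ := hbig
    exact ⟨_, hSpow i, Finsupp.single_le_iff.2 hi⟩
  simp only [not_exists, not_le] at hbig
  set D := ((Iic ⇑v).filter fun a => ∑ i, a i = d).map
    Finsupp.equivFunOnFinite.symm.toEmbedding
  have hsub {T : Finset (Fin n →₀ ℕ)} (hT : ∀ w ∈ T, ∑ i, w i = d) :
      T ⊆ univ.finsuppAntidiag d := fun w hw => by
    simp [mem_finsuppAntidiag, hT w hw]
  have hD : ∀ w ∈ D, w ≤ v ∧ ∑ i, w i = d := by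
    simp [D, Finsupp.le_def, Pi.le_def]
  have hCD : Cndk n d q r ≤ D.card := by
    rw [card_map]
    exact cndk_le_divCount hr (fun i => by have := hbig i; omega) hv
  have hDcard := card_le_card (hsub fun w hw => (hD w hw).2)
  rw [card_finsuppAntidiag_nat_eq_choose, card_univ, Fintype.card_fin] at hDcard
  obtain ⟨w, hw⟩ := inter_nonempty_of_card_lt_card_add_card (hsub hSdeg)
    (hsub fun w hw => (hD w hw).2) (by
      rw [card_finsuppAntidiag_nat_eq_choose, card_univ, Fintype.card_fin, hScard, Nndk]
      omega)
  exact ⟨w, (mem_inter.1 hw).1, (hD w (mem_inter.1 hw).2).1⟩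

theorem stmt_6_general (K : Type) [Field K] (n d k q r : ℕ)
    (hqr : k = q * (d - 1) + r) (hr : r < d - 1)
    (S : Finset (Fin n →₀ ℕ)) (hSdeg : ∀ v ∈ S, ∑ i, v i = d)
    (hSpow : ∀ i : Fin n, Finsupp.single i d ∈ S)
    (hScard : S.card = Nndk n d q r) :
    ∀ v : Fin n →₀ ℕ, (∑ i, v i = k) →
      monomial v (1 : K) ∈ Ideal.span ((fun w => monomial w (1 : K)) '' (S : Set (Fin n →₀ ℕ))) := by
  intro v hv
  rw [mem_ideal_span_monomial_image]
  intro u hu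
  obtain rfl := mem_singleton.1 (support_monomial_subset hu)
  exact exists_mem_le_of_card_eq hr hSdeg hSpow hScard (hv.trans hqr)

/-- Fix `n ≥ 1`, `d ≥ 2`, `d ≤ k ≤ n(d-1)`, `k = q(d-1)+r`, `0 ≤ r < d-1`, and
`N = N(n,d,k)`. If `J` is the ideal generated by the monomials `x₁^d, …, x_n^d`
together with `N − n` further distinct monomials of degree `d` (i.e. by any `N` distinct
monomials of degree `d` including all the `x_i^d`), then `J` contains every monomial of
degree `k`, i.e. `J_k = K[x₁,…,x_n]_k`. -/
theorem stmt_6 (K : Type) [Field K] (n d k q r : ℕ) (hn : 1 ≤ n) (hd : 2 ≤ d)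
    (hdk : d ≤ k) (hk : k ≤ n * (d - 1)) (hqr : k = q * (d - 1) + r) (hr : r < d - 1)
    (S : Finset (Fin n →₀ ℕ)) (hSdeg : ∀ v ∈ S, ∑ i, v i = d)
    (hSpow : ∀ i : Fin n, Finsupp.single i d ∈ S)
    (hScard : S.card = Nndk n d q r) :
    ∀ v : Fin n →₀ ℕ, (∑ i, v i = k) →
      monomial v (1 : K) ∈ Ideal.span ((fun w => monomial w (1 : K)) '' (S : Set (Fin n →₀ ℕ))) :=
  stmt_6_general K n d k q r hqr hr S hSdeg hSpow hScard
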